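/- arXiv:2005.07821 — 3 statements merged into one kernel-verified Lean document; each statement's English description precedes it below -/
import Mathlib

section
/- Let τ ∈ ℕ with τ ≥ 1 and let R be the τ×τ fundamental matrix of the CUSIGN Markov chain with p₊ = p₋ = 1/2. Then I_τ − R is invertible and the first component (index 0) of the vector μ = (I_τ − R)^{−1}·𝟙, where 𝟙 is the all-ones vector in ℝ^τ, equals τ(τ+1). Consequently the expected CUSIGN alarm rate E[α] = (μ_0)^{−1} equals 1/(τ(τ+1)); in particular E[α] = 1/2, 1/6, 1/12, 1/20 for τ = 1, 2, 3, 4 respectively. -/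
open Matrix

/-- The `τ × τ` fundamental matrix of the CUSIGN Markov chain (transient states only),
with up-probability `p₊ = p` and down-probability `p₋ = 1 - p`:
`R 0 0 = 1 - p`, `R i (i-1) = 1 - p`, `R i (i+1) = p`, all other entries `0`. -/
noncomputable def cusignR (p : ℝ) (τ : ℕ) : Matrix (Fin τ) (Fin τ) ℝ :=
  Matrix.of fun i j =>
    if (j : ℕ) + 1 = (i : ℕ) then 1 - p
    else if (i : ℕ) + 1 = (j : ℕ) then p
    else if (i : ℕ) = 0 ∧ (j : ℕ) = 0 then 1 - p
    else 0

/-!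
For `p₊ = p₋ = 1/2` the inverse of `I - R` is explicit: `(I - R)⁻¹ i k = 2 (τ - max i k)`.
Indeed, applying `R` to a column `n ↦ g n` averages `g (n - 1)` and `g (n + 1)`, where state `0`
reflects to itself and state `τ` is absorbing (`g τ = 0`), and the second difference of
`n ↦ max n k` is the indicator of `k`. Row `0` of the inverse sums to
`∑_{k < τ} 2 (τ - k) = τ (τ + 1)`.
-/

open Finset

section

variable {τ : ℕ}

/-- In `ℕ`, `i - 1 = 0` for `i = 0`: this encodes the reflection `R₀₀ = p₋`. -/
lemma cusignR_apply (p : ℝ) (i j : Fin τ) :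
    cusignR p τ i j =
      (if (j : ℕ) = i - 1 then 1 - p else 0) + (if (j : ℕ) = i + 1 then p else 0) := by
  simp only [cusignR, of_apply]
  split_ifs <;> first | ring1 | (exfalso; omega)

lemma sum_ite_val_eq_mul {R : Type*} [Semiring R] (g : ℕ → R) (m : ℕ) (c : R) :
    ∑ j : Fin τ, (if (j : ℕ) = m then c else 0) * g j = if m < τ then c * g m else 0 := by
  rw [Fin.sum_univ_eq_sum_range (fun j => (if j = m then c else 0) * g j)]
  simp only [ite_mul, zero_mul, sum_ite_eq', mem_range]

lemma cusignR_mulVec_apply (p : ℝ) (g : ℕ → ℝ) (hg : g τ = 0) (i : Fin τ) :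
    (cusignR p τ *ᵥ fun j => g j) i = (1 - p) * g (i - 1) + p * g (i + 1) := by
  have hi := i.isLt
  simp only [mulVec, dotProduct, cusignR_apply, add_mul, sum_add_distrib, sum_ite_val_eq_mul]
  rw [if_pos (by omega)]
  split_ifs with h
  · rfl
  · rw [show (i : ℕ) + 1 = τ by omega, hg, mul_zero]

lemma max_pred_add_max_succ (i k : ℕ) :
    max (i - 1) k + max (i + 1) k = 2 * max i k + if i = k then 1 else 0 := by
  split_ifs <;> omega

/-- The Green's function of the symmetric walk on `{0, …, τ - 1}`, reflected at `0` and killed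
at `τ`: the expected number of visits to `k` starting from `i`. -/
noncomputable def cusignHalfInv (τ : ℕ) : Matrix (Fin τ) (Fin τ) ℝ :=
  of fun i k => 2 * ((τ : ℝ) - (max (i : ℕ) (k : ℕ) : ℕ))

lemma one_sub_cusignR_half_mul_cusignHalfInv :
    (1 - cusignR (1 / 2) τ) * cusignHalfInv τ = 1 := by
  ext i k
  set g : ℕ → ℝ := fun n => 2 * ((τ : ℝ) - (max n (k : ℕ) : ℕ))
  have hg : g τ = 0 := by simp [g]
  have hR : (cusignR (1 / 2) τ * cusignHalfInv τ) i k =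
      (cusignR (1 / 2) τ *ᵥ fun j => g j) i := rfl
  have hmax : ((max (i - 1 : ℕ) k : ℕ) : ℝ) + (max (i + 1 : ℕ) k : ℕ)
      = 2 * (max (i : ℕ) k : ℕ) + if (i : ℕ) = k then 1 else 0 := by
    exact_mod_cast max_pred_add_max_succ i k
  rw [sub_mul, one_mul, Matrix.sub_apply, hR, cusignR_mulVec_apply _ _ hg, one_apply]
  simp only [cusignHalfInv, of_apply, g, Fin.ext_iff]
  split_ifs at hmax ⊢ <;> linarith

lemma sum_range_two_mul_sub {R : Type*} [CommRing R] (t : R) (n : ℕ) :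
    ∑ k ∈ range n, 2 * (t - k) = n * (2 * t - n + 1) := by
  induction n with
  | zero => simp
  | succ n ih =>
    rw [sum_range_succ, ih]
    push_cast
    ring

lemma cusignHalfInv_mulVec_one_zero (hτ : 0 < τ) :
    (cusignHalfInv τ *ᵥ fun _ => 1) ⟨0, hτ⟩ = (τ : ℝ) * (τ + 1) := by
  simp only [mulVec, dotProduct, mul_one, cusignHalfInv, of_apply, Nat.zero_max]
  rw [Fin.sum_univ_eq_sum_range (fun k => 2 * ((τ : ℝ) - k)), sum_range_two_mul_sub]
  ring

end

/-- For `p₊ = p₋ = 1/2`, `I - R` is invertible, the first component of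
`μ = (I - R)⁻¹ · 𝟙` equals `τ (τ + 1)`, and hence the expected alarm rate
`E[α] = μ₀⁻¹` equals `1 / (τ (τ + 1))`. -/
theorem cusign_expected_alarm_rate (τ : ℕ) (hτ : 1 ≤ τ) :
    IsUnit (1 - cusignR (1/2) τ) ∧
    ((1 - cusignR (1/2) τ)⁻¹ *ᵥ (fun _ => (1 : ℝ))) ⟨0, hτ⟩ = (τ : ℝ) * (τ + 1) ∧
    (((1 - cusignR (1/2) τ)⁻¹ *ᵥ (fun _ => (1 : ℝ))) ⟨0, hτ⟩)⁻¹
      = 1 / ((τ : ℝ) * (τ + 1)) := by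
  have hright := one_sub_cusignR_half_mul_cusignHalfInv (τ := τ)
  have hμ : ((1 - cusignR (1/2) τ)⁻¹ *ᵥ (fun _ => (1 : ℝ))) ⟨0, hτ⟩ = (τ : ℝ) * (τ + 1) := by
    rw [inv_eq_right_inv hright]
    exact cusignHalfInv_mulVec_one_zero hτ
  exact ⟨(isUnit_iff_isUnit_det _).2 (isUnit_det_of_right_inverse hright), hμ,
    by rw [hμ, one_div]⟩
end

section
/- On a probability space let (ε_k)_{k≥1} be an i.i.d. sequence of integer-valued random variables with P(ε_k = 1) = P(ε_k = −1) = 1/2. For threshold τ ≥ 1 define S_0 = 0, S_k = max(0, S_{k−1} + ε_k), and T = inf{k ≥ 1 : S_k = τ}. Then T is integrable and E[T] = τ(τ+1). -/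
/-!
Put `φ x = x (x + 1)`. From a state `s ≥ 0`, a step `e = ±1` of the reflected walk changes `φ` by
exactly `1 + (2 s + 1) e`; the reflection at `0` is invisible to `φ` because `φ 0 = φ (-1)`. As `ε`
is independent of the past and centred, `E φ(S_{n ∧ T}) = ∑_{j < n} P(T > j)`. The left side is at
most `φ τ`, so `E T = ∑_j P(T > j) < ∞`; hence `T < ∞` a.s., `φ(S_{n ∧ T}) → φ τ` a.s., and dominated
convergence gives `E T = φ τ = τ (τ + 1)`.
-/

open MeasureTheory ProbabilityTheory Filter Topology
open scoped ENNReal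

lemma ENat.natCast_lt_iInf_iff {P : ℕ → Prop} {n : ℕ} :
    (n : ℕ∞) < ⨅ (k : ℕ) (_ : P k), (k : ℕ∞) ↔ ∀ k, P k → n < k := by
  rw [← ENat.add_one_le_iff (ENat.natCast_ne_top n), le_iInf₂_iff]
  refine forall₂_congr fun k _ => ?_
  rw [ENat.add_one_le_iff (ENat.natCast_ne_top n), Nat.cast_lt]

lemma ENat.toENNReal_eq_tsum_ite (a : ℕ∞) :
    (a : ℝ≥0∞) = ∑' n : ℕ, if (n : ℕ∞) < a then 1 else 0 := by
  induction a using ENat.recTopCoe with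
  | top => simp
  | coe m =>
    rw [tsum_eq_sum (s := Finset.range m) (by simp)]
    simp [Finset.filter_true_of_mem]

lemma lintegral_enat_eq_tsum_measure_lt {Ω : Type*} [MeasurableSpace Ω] (μ : Measure Ω)
    {T : Ω → ℕ∞} (hT : ∀ n : ℕ, MeasurableSet {ω | (n : ℕ∞) < T ω}) :
    ∫⁻ ω, (T ω : ℝ≥0∞) ∂μ = ∑' n : ℕ, μ {ω | (n : ℕ∞) < T ω} := by
  simp_rw [ENat.toENNReal_eq_tsum_ite]
  rw [lintegral_tsum fun n => (measurable_const.ite (hT n) measurable_const).aemeasurable]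
  refine tsum_congr fun n => ?_
  rw [← lintegral_indicator_one (hT n)]
  simp [Set.indicator_apply]

section SymmetricSign

variable {Ω : Type*} [MeasurableSpace Ω] {μ : Measure Ω} [IsProbabilityMeasure μ] {X : Ω → ℤ}

lemma ae_eq_one_or_eq_neg_one_of_measure_eq_half (hX : Measurable X)
    (h1 : μ {ω | X ω = 1} = ENNReal.ofReal (1 / 2))
    (h2 : μ {ω | X ω = -1} = ENNReal.ofReal (1 / 2)) :
    ∀ᵐ ω ∂μ, X ω = 1 ∨ X ω = -1 := by
  have hdisj : Disjoint {ω | X ω = 1} {ω | X ω = -1} :=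
    Set.disjoint_left.2 fun ω h h' => by simp_all
  have hm1 : MeasurableSet {ω | X ω = 1} := hX (measurableSet_singleton 1)
  have hm2 : MeasurableSet {ω | X ω = -1} := hX (measurableSet_singleton (-1))
  rw [ae_iff, ← Set.compl_ofPred, Set.ofPred_or, prob_compl_eq_zero_iff (hm1.union hm2),
    measure_union hdisj hm2, h1, h2, ← ENNReal.ofReal_add (by norm_num) (by norm_num)]
  norm_num

lemma integral_intCast_eq_zero_of_measure_eq_half (hX : Measurable X)
    (h1 : μ {ω | X ω = 1} = ENNReal.ofReal (1 / 2))
    (h2 : μ {ω | X ω = -1} = ENNReal.ofReal (1 / 2)) :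
    ∫ ω, (X ω : ℝ) ∂μ = 0 := by
  have hm1 : MeasurableSet {ω | X ω = 1} := hX (measurableSet_singleton 1)
  have hm2 : MeasurableSet {ω | X ω = -1} := hX (measurableSet_singleton (-1))
  have hae : (fun ω => (X ω : ℝ)) =ᵐ[μ] {ω | X ω = 1}.indicator 1 - {ω | X ω = -1}.indicator 1 := by
    filter_upwards [ae_eq_one_or_eq_neg_one_of_measure_eq_half hX h1 h2] with ω hω
    rcases hω with h | h <;> simp [Set.indicator, h]
  rw [integral_congr_ae hae, integral_sub' ((integrable_const 1).indicator hm1)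
    ((integrable_const 1).indicator hm2), integral_indicator_one hm1, integral_indicator_one hm2,
    measureReal_def, measureReal_def, h1, h2, sub_self]

end SymmetricSign

lemma max_zero_add_mul_add_one {s e : ℤ} (hs : 0 ≤ s) (he : e = 1 ∨ e = -1) :
    max 0 (s + e) * (max 0 (s + e) + 1) = s * (s + 1) + 1 + (2 * s + 1) * e := by
  rcases he with rfl | rfl
  · rw [max_eq_right (by omega)]; ring
  · rcases hs.eq_or_lt with rfl | hs
    · norm_num
    · rw [max_eq_right (by omega)]; ring

noncomputable section HittingTime

variable {Ω : Type*} (X : ℕ → Ω → ℤ) (a : ℤ)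

def firstHittingTime (ω : Ω) : ℕ∞ :=
  ⨅ (k : ℕ) (_ : 1 ≤ k ∧ X k ω = a), (k : ℕ∞)

/-- `X` stopped at `firstHittingTime X a`, where its value is `a`. -/
def stoppedWalk (n : ℕ) (ω : Ω) : ℤ :=
  if (n : ℕ∞) < firstHittingTime X a ω then X n ω else a

def stoppedPotential (n : ℕ) (ω : Ω) : ℝ :=
  ((stoppedWalk X a n ω * (stoppedWalk X a n ω + 1) : ℤ) : ℝ)

variable {X a} {n : ℕ} {ω : Ω}

lemma natCast_lt_firstHittingTime_iff :
    (n : ℕ∞) < firstHittingTime X a ω ↔ ∀ k, 1 ≤ k → k ≤ n → X k ω ≠ a := by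
  rw [firstHittingTime, ENat.natCast_lt_iInf_iff]
  refine ⟨fun h k hk hkn hXk => absurd (h k ⟨hk, hXk⟩) (by omega),
    fun h k ⟨hk, hXk⟩ => ?_⟩
  by_contra hkn
  exact h k hk (by omega) hXk

lemma succ_lt_firstHittingTime_iff :
    ((n + 1 : ℕ) : ℕ∞) < firstHittingTime X a ω ↔
      (n : ℕ∞) < firstHittingTime X a ω ∧ X (n + 1) ω ≠ a := by
  simp only [natCast_lt_firstHittingTime_iff]
  refine ⟨fun h => ⟨fun k hk hkn => h k hk (by omega), h _ (by omega) le_rfl⟩, ?_⟩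
  rintro ⟨h, hn⟩ k hk hkn
  rcases Nat.le_succ_iff.1 hkn with hkn | rfl
  exacts [h k hk hkn, hn]

lemma measurableSet_natCast_lt_firstHittingTime {m : MeasurableSpace Ω}
    (hX : ∀ k ≤ n, Measurable[m] (X k)) :
    MeasurableSet[m] {ω | (n : ℕ∞) < firstHittingTime X a ω} := by
  simp_rw [natCast_lt_firstHittingTime_iff, Set.ofPred_forall]
  exact .iInter fun k => .iInter fun _ => .iInter fun hk =>
    hX k hk (measurableSet_singleton a).compl

lemma stoppedWalk_of_lt (h : (n : ℕ∞) < firstHittingTime X a ω) :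
    stoppedWalk X a n ω = X n ω :=
  if_pos h

lemma stoppedWalk_zero : stoppedWalk X a 0 ω = X 0 ω :=
  stoppedWalk_of_lt (natCast_lt_firstHittingTime_iff.2 fun k hk hk0 => by omega)

lemma stoppedWalk_of_not_lt (h : ¬(n : ℕ∞) < firstHittingTime X a ω) :
    stoppedWalk X a n ω = a :=
  if_neg h

lemma stoppedWalk_succ_of_lt (h : (n : ℕ∞) < firstHittingTime X a ω) :
    stoppedWalk X a (n + 1) ω = X (n + 1) ω := by
  by_cases hX : X (n + 1) ω = a
  · rw [stoppedWalk_of_not_lt fun h' => (succ_lt_firstHittingTime_iff.1 h').2 hX, hX]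
  · exact if_pos (succ_lt_firstHittingTime_iff.2 ⟨h, hX⟩)

end HittingTime

section ReflectedWalk

variable {Ω : Type*}

def reflectedWalk (ε : ℕ → Ω → ℤ) : ℕ → Ω → ℤ
  | 0 => fun _ => 0
  | k + 1 => fun ω => max 0 (reflectedWalk ε k ω + ε (k + 1) ω)

variable {ε : ℕ → Ω → ℤ} {a : ℤ} {n : ℕ} {ω : Ω}

lemma reflectedWalk_succ :
    reflectedWalk ε (n + 1) ω = max 0 (reflectedWalk ε n ω + ε (n + 1) ω) :=
  rfl

lemma eq_reflectedWalk {S : ℕ → Ω → ℤ} (hS0 : ∀ ω, S 0 ω = 0)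
    (hS : ∀ k ω, S (k + 1) ω = max 0 (S k ω + ε (k + 1) ω)) :
    S = reflectedWalk ε := by
  funext n ω
  induction n generalizing ω with
  | zero => exact hS0 ω
  | succ k ih => rw [hS, ih]; rfl

lemma reflectedWalk_nonneg : 0 ≤ reflectedWalk ε n ω := by
  cases n
  · exact le_rfl
  · exact le_max_left _ _

lemma reflectedWalk_lt_of_lt_firstHittingTime (ha : 0 < a) (hω : ∀ k, ε (k + 1) ω ≤ 1)
    (h : (n : ℕ∞) < firstHittingTime (reflectedWalk ε) a ω) : reflectedWalk ε n ω < a := by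
  induction n with
  | zero => exact ha
  | succ k ih =>
    obtain ⟨hk, hne⟩ := succ_lt_firstHittingTime_iff.1 h
    have hle : reflectedWalk ε k ω + ε (k + 1) ω ≤ a := by linarith [ih hk, hω k]
    exact lt_of_le_of_ne (max_le ha.le hle) hne

lemma stoppedWalk_mem_Icc (ha : 0 < a) (hω : ∀ k, ε (k + 1) ω ≤ 1) :
    stoppedWalk (reflectedWalk ε) a n ω ∈ Set.Icc 0 a := by
  by_cases h : (n : ℕ∞) < firstHittingTime (reflectedWalk ε) a ω
  · rw [stoppedWalk_of_lt h]
    exact ⟨reflectedWalk_nonneg, (reflectedWalk_lt_of_lt_firstHittingTime ha hω h).le⟩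
  · rw [stoppedWalk_of_not_lt h]
    exact ⟨ha.le, le_rfl⟩

lemma abs_stoppedPotential_le (ha : 0 < a) (hω : ∀ k, ε (k + 1) ω ≤ 1) :
    |stoppedPotential (reflectedWalk ε) a n ω| ≤ ((a * (a + 1) : ℤ) : ℝ) := by
  obtain ⟨h0, ha'⟩ := stoppedWalk_mem_Icc (n := n) ha hω
  rw [stoppedPotential, ← Int.cast_abs, Int.cast_le, abs_of_nonneg (by positivity)]
  exact mul_le_mul ha' (by omega) (by omega) ha.le

lemma stoppedPotential_succ_sub (hω : ε (n + 1) ω = 1 ∨ ε (n + 1) ω = -1) :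
    stoppedPotential (reflectedWalk ε) a (n + 1) ω - stoppedPotential (reflectedWalk ε) a n ω =
      {ω | (n : ℕ∞) < firstHittingTime (reflectedWalk ε) a ω}.indicator 1 ω +
        {ω | (n : ℕ∞) < firstHittingTime (reflectedWalk ε) a ω}.indicator
          (fun ω => (2 * reflectedWalk ε n ω + 1 : ℝ)) ω * ε (n + 1) ω := by
  by_cases h : (n : ℕ∞) < firstHittingTime (reflectedWalk ε) a ω
  · have hstep := congrArg (Int.cast : ℤ → ℝ)
      (max_zero_add_mul_add_one (reflectedWalk_nonneg (ε := ε) (n := n) (ω := ω)) hω)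
    push_cast at hstep
    have hA : ω ∈ {ω | (n : ℕ∞) < firstHittingTime (reflectedWalk ε) a ω} := h
    rw [stoppedPotential, stoppedPotential, stoppedWalk_succ_of_lt h, stoppedWalk_of_lt h,
      reflectedWalk_succ, Set.indicator_of_mem hA, Set.indicator_of_mem hA, Pi.one_apply]
    push_cast
    linarith
  · have h' : ¬((n + 1 : ℕ) : ℕ∞) < firstHittingTime (reflectedWalk ε) a ω :=
      fun h' => h (succ_lt_firstHittingTime_iff.1 h').1
    have hA : ω ∉ {ω | (n : ℕ∞) < firstHittingTime (reflectedWalk ε) a ω} := h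
    rw [stoppedPotential, stoppedPotential, stoppedWalk_of_not_lt h, stoppedWalk_of_not_lt h',
      Set.indicator_of_notMem hA, Set.indicator_of_notMem hA]
    ring

end ReflectedWalk

lemma tsum_measure_eq_ofReal_tsum_measureReal {Ω : Type*} [MeasurableSpace Ω] {μ : Measure Ω}
    [IsFiniteMeasure μ] {s : ℕ → Set Ω} (h : Summable fun n => μ.real (s n)) :
    ∑' n, μ (s n) = ENNReal.ofReal (∑' n, μ.real (s n)) := by
  rw [ENNReal.ofReal_tsum_of_nonneg (fun _ => measureReal_nonneg) h]
  exact tsum_congr fun n => (ofReal_measureReal (measure_ne_top μ _)).symm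

section Expectation

variable {Ω : Type*} [MeasurableSpace Ω] {μ : Measure Ω} {ε : ℕ → Ω → ℤ} {a : ℤ}

lemma measurable_reflectedWalk_natural (hε : ∀ k, StronglyMeasurable (ε k)) {n k : ℕ}
    (hk : k ≤ n) : Measurable[Filtration.natural ε hε n] (reflectedWalk ε k) := by
  induction k with
  | zero => exact measurable_const
  | succ k ih =>
    exact measurable_const.max ((ih (by omega)).add
      ((Filtration.stronglyAdapted_natural hε (k + 1)).measurable.mono
        (Filtration.mono _ hk) le_rfl))

lemma measurableSet_lt_firstHittingTime_natural (hε : ∀ k, StronglyMeasurable (ε k)) (n : ℕ) :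
    MeasurableSet[Filtration.natural ε hε n]
      {ω | (n : ℕ∞) < firstHittingTime (reflectedWalk ε) a ω} :=
  measurableSet_natCast_lt_firstHittingTime fun _ hk => measurable_reflectedWalk_natural hε hk

lemma measurable_stoppedPotential (hε : ∀ k, StronglyMeasurable (ε k)) (n : ℕ) :
    Measurable (stoppedPotential (reflectedWalk ε) a n) := by
  have hR : Measurable[Filtration.natural ε hε n] (stoppedWalk (reflectedWalk ε) a n) :=
    Measurable.ite (measurableSet_lt_firstHittingTime_natural hε n)
      (measurable_reflectedWalk_natural hε le_rfl) measurable_const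
  exact measurable_from_top.comp
    ((hR.mul (hR.add measurable_const)).mono (Filtration.le _ n) le_rfl)

lemma indep_natural_comap_succ (hε : ∀ k, StronglyMeasurable (ε k)) (hindep : iIndepFun ε μ)
    (n : ℕ) :
    Indep (Filtration.natural ε hε n) (MeasurableSpace.comap (ε (n + 1)) inferInstance) μ := by
  have h := indep_iSup_of_disjoint (fun k => (hε k).measurable.comap_le)
    ((iIndepFun_iff_iIndep _ _ _).1 hindep) (S := Set.Iic n) (T := {n + 1})
    (Set.disjoint_singleton_right.2 (by simp))
  rwa [iSup_singleton] at h

lemma ae_abs_stoppedPotential_le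
    (hgood : ∀ᵐ ω ∂μ, ∀ k, ε (k + 1) ω = 1 ∨ ε (k + 1) ω = -1) (ha : 0 < a) (n : ℕ) :
    ∀ᵐ ω ∂μ, |stoppedPotential (reflectedWalk ε) a n ω| ≤ ((a * (a + 1) : ℤ) : ℝ) := by
  filter_upwards [hgood] with ω hω
  exact abs_stoppedPotential_le ha fun k => (hω k).elim le_of_eq fun h => by omega

lemma integrable_stoppedPotential [IsFiniteMeasure μ] (hε : ∀ k, StronglyMeasurable (ε k))
    (hgood : ∀ᵐ ω ∂μ, ∀ k, ε (k + 1) ω = 1 ∨ ε (k + 1) ω = -1) (ha : 0 < a) (n : ℕ) :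
    Integrable (stoppedPotential (reflectedWalk ε) a n) μ :=
  .of_bound (measurable_stoppedPotential hε n).aestronglyMeasurable _
    (ae_abs_stoppedPotential_le hgood ha n)

lemma integral_stoppedPotential_succ [IsFiniteMeasure μ] (hε : ∀ k, StronglyMeasurable (ε k))
    (hindep : iIndepFun ε μ) (hgood : ∀ᵐ ω ∂μ, ∀ k, ε (k + 1) ω = 1 ∨ ε (k + 1) ω = -1)
    (hmean : ∀ k, ∫ ω, (ε (k + 1) ω : ℝ) ∂μ = 0) (ha : 0 < a) (n : ℕ) :
    ∫ ω, stoppedPotential (reflectedWalk ε) a (n + 1) ω ∂μ =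
      ∫ ω, stoppedPotential (reflectedWalk ε) a n ω ∂μ +
        μ.real {ω | (n : ℕ∞) < firstHittingTime (reflectedWalk ε) a ω} := by
  set A := {ω | (n : ℕ∞) < firstHittingTime (reflectedWalk ε) a ω}
  set Y := A.indicator fun ω => (2 * reflectedWalk ε n ω + 1 : ℝ)
  set e := fun ω => (ε (n + 1) ω : ℝ)
  have hAn : MeasurableSet[Filtration.natural ε hε n] A :=
    measurableSet_lt_firstHittingTime_natural hε n
  have hA : MeasurableSet A := Filtration.le _ n _ hAn
  have hYn : Measurable[Filtration.natural ε hε n] Y :=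
    ((measurable_const.mul (measurable_from_top.comp
      (measurable_reflectedWalk_natural hε le_rfl))).add measurable_const).indicator hAn
  have he : Measurable[MeasurableSpace.comap (ε (n + 1)) inferInstance] e :=
    measurable_from_top.comp (comap_measurable _)
  have hYe_indep : IndepFun Y e μ := by
    rw [IndepFun_iff_Indep]
    exact indep_of_indep_of_le_left (indep_of_indep_of_le_right
      (indep_natural_comap_succ hε hindep n) he.comap_le) hYn.comap_le
  have hint := integrable_stoppedPotential hε hgood ha
  have hAi : Integrable (A.indicator (1 : Ω → ℝ)) μ := (integrable_const 1).indicator hA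
  have hstep : (fun ω => stoppedPotential (reflectedWalk ε) a (n + 1) ω -
      stoppedPotential (reflectedWalk ε) a n ω) =ᵐ[μ] A.indicator 1 + Y * e := by
    filter_upwards [hgood] with ω hω using stoppedPotential_succ_sub (hω n)
  have hYe : Integrable (Y * e) μ := by
    refine (((hint (n + 1)).sub (hint n)).sub hAi).congr ?_
    filter_upwards [hstep] with ω h
    simp only [Pi.sub_apply, h, Pi.add_apply, add_sub_cancel_left]
  rw [← sub_eq_iff_eq_add', ← integral_sub (hint _) (hint _), integral_congr_ae hstep,
    integral_add' hAi hYe, integral_indicator_one hA,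
    hYe_indep.integral_mul_eq_mul_integral
      (hYn.mono (Filtration.le _ n) le_rfl).aestronglyMeasurable
      (he.mono (hε (n + 1)).measurable.comap_le le_rfl).aestronglyMeasurable,
    hmean n, mul_zero, add_zero]

lemma integral_stoppedPotential_eq_sum [IsFiniteMeasure μ] (hε : ∀ k, StronglyMeasurable (ε k))
    (hindep : iIndepFun ε μ) (hgood : ∀ᵐ ω ∂μ, ∀ k, ε (k + 1) ω = 1 ∨ ε (k + 1) ω = -1)
    (hmean : ∀ k, ∫ ω, (ε (k + 1) ω : ℝ) ∂μ = 0) (ha : 0 < a) (n : ℕ) :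
    ∫ ω, stoppedPotential (reflectedWalk ε) a n ω ∂μ =
      ∑ j ∈ Finset.range n, μ.real {ω | (j : ℕ∞) < firstHittingTime (reflectedWalk ε) a ω} := by
  induction n with
  | zero => simp [stoppedPotential, stoppedWalk_zero, reflectedWalk]
  | succ n ih =>
    rw [integral_stoppedPotential_succ hε hindep hgood hmean ha, ih, Finset.sum_range_succ]

lemma tendsto_integral_stoppedPotential [IsProbabilityMeasure μ] (hε : ∀ k, StronglyMeasurable (ε k))
    (hgood : ∀ᵐ ω ∂μ, ∀ k, ε (k + 1) ω = 1 ∨ ε (k + 1) ω = -1) (ha : 0 < a)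
    (hfin : ∑' n : ℕ, μ {ω | (n : ℕ∞) < firstHittingTime (reflectedWalk ε) a ω} ≠ ∞) :
    Tendsto (fun n => ∫ ω, stoppedPotential (reflectedWalk ε) a n ω ∂μ) atTop
      (𝓝 ((a * (a + 1) : ℤ) : ℝ)) := by
  have hlim : ∀ᵐ ω ∂μ, Tendsto (fun n => stoppedPotential (reflectedWalk ε) a n ω) atTop
      (𝓝 ((a * (a + 1) : ℤ) : ℝ)) := by
    filter_upwards [ae_eventually_notMem hfin] with ω hω
    exact tendsto_const_nhds.congr' (hω.mono fun n hn => by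
      simp only [stoppedPotential, stoppedWalk_of_not_lt hn])
  simpa using tendsto_integral_of_dominated_convergence _
    (fun n => (measurable_stoppedPotential hε n).aestronglyMeasurable) (integrable_const _)
    (ae_abs_stoppedPotential_le hgood ha) hlim

theorem lintegral_firstHittingTime_reflectedWalk [IsProbabilityMeasure μ] (hε : ∀ k, StronglyMeasurable (ε k))
    (hindep : iIndepFun ε μ) (hgood : ∀ᵐ ω ∂μ, ∀ k, ε (k + 1) ω = 1 ∨ ε (k + 1) ω = -1)
    (hmean : ∀ k, ∫ ω, (ε (k + 1) ω : ℝ) ∂μ = 0) (ha : 0 < a) :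
    ∫⁻ ω, (firstHittingTime (reflectedWalk ε) a ω : ℝ≥0∞) ∂μ =
      ENNReal.ofReal ((a * (a + 1) : ℤ) : ℝ) := by
  have hsum := integral_stoppedPotential_eq_sum hε hindep hgood hmean ha
  have hle : ∀ n, ∫ ω, stoppedPotential (reflectedWalk ε) a n ω ∂μ ≤ ((a * (a + 1) : ℤ) : ℝ) :=
    fun n => (integral_mono_ae (integrable_stoppedPotential hε hgood ha n) (integrable_const _)
      ((ae_abs_stoppedPotential_le hgood ha n).mono fun _ => le_of_abs_le)).trans_eq (by simp)
  have hsummable := summable_of_sum_range_le (fun _ => measureReal_nonneg) fun n => hsum n ▸ hle n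
  have hlim := tendsto_integral_stoppedPotential hε hgood ha
    (by rw [tsum_measure_eq_ofReal_tsum_measureReal hsummable]; exact ENNReal.ofReal_ne_top)
  simp_rw [hsum] at hlim
  rw [lintegral_enat_eq_tsum_measure_lt μ fun n => Filtration.le _ n _
      (measurableSet_lt_firstHittingTime_natural hε n),
    tsum_measure_eq_ofReal_tsum_measureReal hsummable,
    ((hasSum_iff_tendsto_nat_of_nonneg (fun _ => measureReal_nonneg) _).2 hlim).tsum_eq]

end Expectation

/-- For the reflected random walk `S₀ = 0`, `S_k = max (0, S_{k-1} + ε_k)` driven by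
i.i.d. symmetric signs (`P(ε_k = 1) = P(ε_k = −1) = 1/2`), the hitting time
`T = inf {k ≥ 1 : S_k = τ}` is integrable with `E[T] = τ (τ + 1)`. -/
theorem cusign_ARL_symmetric {Ω : Type*} [MeasureSpace Ω]
    [IsProbabilityMeasure (ℙ : Measure Ω)]
    (ε : ℕ → Ω → ℤ) (hmeas : ∀ k, Measurable (ε k))
    (hindep : iIndepFun ε ℙ)
    (hup : ∀ k, 1 ≤ k → ℙ {ω | ε k ω = 1} = ENNReal.ofReal (1/2))
    (hdown : ∀ k, 1 ≤ k → ℙ {ω | ε k ω = -1} = ENNReal.ofReal (1/2))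
    (τ : ℕ) (hτ : 1 ≤ τ)
    (S : ℕ → Ω → ℤ) (hS0 : ∀ ω, S 0 ω = 0)
    (hS : ∀ k ω, S (k + 1) ω = max 0 (S k ω + ε (k + 1) ω))
    (T : Ω → ℕ∞)
    (hT : ∀ ω, T ω = ⨅ (k : ℕ) (_ : 1 ≤ k ∧ S k ω = (τ : ℤ)), (k : ℕ∞)) :
    (∫⁻ ω, (T ω : ℝ≥0∞) ∂ℙ ≠ ⊤) ∧
    (∫⁻ ω, (T ω : ℝ≥0∞) ∂ℙ).toReal = (τ : ℝ) * (τ + 1) := by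
  obtain rfl : S = reflectedWalk ε := eq_reflectedWalk hS0 hS
  obtain rfl : T = firstHittingTime (reflectedWalk ε) τ := funext hT
  have hgood : ∀ᵐ ω ∂ℙ, ∀ k, ε (k + 1) ω = 1 ∨ ε (k + 1) ω = -1 := ae_all_iff.2 fun k =>
    ae_eq_one_or_eq_neg_one_of_measure_eq_half (hmeas _) (hup _ k.succ_pos) (hdown _ k.succ_pos)
  have hmean : ∀ k, ∫ ω, (ε (k + 1) ω : ℝ) = 0 := fun k =>
    integral_intCast_eq_zero_of_measure_eq_half (hmeas _) (hup _ k.succ_pos) (hdown _ k.succ_pos)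
  rw [lintegral_firstHittingTime_reflectedWalk (fun k => (hmeas k).stronglyMeasurable) hindep
    hgood hmean (by exact_mod_cast hτ)]
  push_cast
  exact ⟨ENNReal.ofReal_ne_top, ENNReal.toReal_ofReal (by positivity)⟩
end

section
/- Let ℓ ∈ ℕ with ℓ ≥ 1, let p ∈ [0,1], and on a probability space let (ζ_k)_{k≥1} be i.i.d. {0,1}-valued random variables with P(ζ_k = 1) = p. Define the Memoryless Run-time Estimator α̂_0 = 0, α̂_k = α̂_{k−1} + (ζ_k − α̂_{k−1})/ℓ. Then for every k ≥ 1, Var[α̂_k] = p(1−p)·(1 − (1 − 1/ℓ)^{2k})/(2ℓ − 1); in particular lim_{k→∞} Var[α̂_k] = p(1−p)/(2ℓ−1) = θ·p(1−p)/ℓ with θ = ℓ/(2ℓ−1), which is the scaling value reported for threshold τ = 1. -/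
/-!
Unrolling the recursion gives `α̂_k = ∑_{j<k} r^j ζ_{k-j} / ℓ` with `r = 1 - 1/ℓ`. The summands
are independent, so the variances add, and the weights `r^{2j}/ℓ²` form a geometric series with
ratio `r²`, whose sum is `(1 - r^{2k})/(2ℓ - 1)` because `(1 - r²) ℓ² = 2ℓ - 1`.
-/

open MeasureTheory ProbabilityTheory Filter Finset

section ZeroOne

variable {Ω : Type*} [MeasurableSpace Ω] {μ : Measure Ω} {X : Ω → ℝ}

lemma memLp_of_forall_eq_zero_or_one [IsFiniteMeasure μ] (hX : AEStronglyMeasurable X μ)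
    (h01 : ∀ ω, X ω = 0 ∨ X ω = 1) (q : ENNReal) : MemLp X q μ :=
  memLp_of_bounded (a := 0) (b := 1)
    (ae_of_all _ fun ω ↦ by rcases h01 ω with h | h <;> simp [h]) hX q

lemma variance_of_forall_eq_zero_or_one [IsProbabilityMeasure μ] (hX : Measurable X)
    (h01 : ∀ ω, X ω = 0 ∨ X ω = 1) :
    Var[X; μ] = μ.real {ω | X ω = 1} * (1 - μ.real {ω | X ω = 1}) := by
  have hsq : X ^ 2 = X := by
    funext ω
    rcases h01 ω with h | h <;> simp [h]
  have hind : X = {ω | X ω = 1}.indicator 1 := by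
    funext ω
    rcases h01 ω with h | h <;> simp [Set.indicator, h]
  have hmean : μ[X] = μ.real {ω | X ω = 1} := by
    conv_lhs => rw [hind]
    exact integral_indicator_one (hX (measurableSet_singleton 1))
  rw [variance_eq_sub (memLp_of_forall_eq_zero_or_one hX.aestronglyMeasurable h01 2), hsq, hmean]
  ring

end ZeroOne

lemma eq_sum_pow_smul_of_forall_eq_smul_add {R M : Type*} [Semiring R] [AddCommMonoid M]
    [Module R M] {a x : ℕ → M} {r : R} (h0 : a 0 = 0) (hrec : ∀ k, a (k + 1) = r • a k + x (k + 1))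
    (k : ℕ) : a k = ∑ j ∈ range k, r ^ j • x (k - j) := by
  induction k with
  | zero => simp [h0]
  | succ k ih =>
    rw [hrec, ih, sum_range_succ', smul_sum]
    simp [pow_succ', mul_smul]

lemma variance_eq_sum_of_forall_eq_smul_add {Ω : Type*} [MeasurableSpace Ω] {μ : Measure Ω}
    {a X : ℕ → Ω → ℝ} {r : ℝ} (h0 : a 0 = 0) (hrec : ∀ k, a (k + 1) = r • a k + X (k + 1))
    (hX : ∀ k, MemLp (X k) 2 μ) (hindep : Pairwise fun i j ↦ IndepFun (X i) (X j) μ) (k : ℕ) :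
    Var[a k; μ] = ∑ j ∈ range k, (r ^ 2) ^ j * Var[X (k - j); μ] := by
  rw [eq_sum_pow_smul_of_forall_eq_smul_add h0 hrec k, IndepFun.variance_sum]
  · simp_rw [variance_smul, ← pow_mul, mul_comm 2]
  · exact fun j _ ↦ (hX _).const_smul _
  · intro i hi j hj hij
    simp only [coe_range, Set.mem_Iio] at hi hj
    exact (hindep (by omega)).comp (measurable_const_mul _) (measurable_const_mul _)

lemma sum_geom_one_sub_inv_sq_mul {ℓ : ℝ} (hℓ : 2 * ℓ - 1 ≠ 0) (k : ℕ) :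
    ∑ j ∈ range k, ((1 - 1 / ℓ) ^ 2) ^ j * (1 / ℓ) ^ 2
      = (1 - (1 - 1 / ℓ) ^ (2 * k)) / (2 * ℓ - 1) := by
  have hweight : (1 / ℓ) ^ 2 * (2 * ℓ - 1) = 1 - (1 - 1 / ℓ) ^ 2 := by
    rcases eq_or_ne ℓ 0 with rfl | h
    · simp
    · field_simp; ring
  rw [eq_div_iff hℓ, ← sum_mul, mul_assoc, hweight, geom_sum_mul_neg, pow_mul]

theorem mre_variance_general {Ω : Type*} [MeasureSpace Ω] [IsProbabilityMeasure (ℙ : Measure Ω)]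
    (ℓ : ℕ) (hℓ : 1 ≤ ℓ) (p : ℝ) (hp0 : 0 ≤ p)
    (ζ : ℕ → Ω → ℝ) (hmeas : ∀ k, Measurable (ζ k))
    (hindep : iIndepFun ζ ℙ)
    (h01 : ∀ k ω, ζ k ω = 0 ∨ ζ k ω = 1)
    (hprob : ∀ k, 1 ≤ k → ℙ {ω | ζ k ω = 1} = ENNReal.ofReal p)
    (a : ℕ → Ω → ℝ) (h0 : ∀ ω, a 0 ω = 0)
    (hrec : ∀ (k : ℕ) (ω : Ω),
      a (k + 1) ω = a k ω + (ζ (k + 1) ω - a k ω) / (ℓ : ℝ)) :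
    (∀ k : ℕ, 1 ≤ k → variance (a k) ℙ
        = p * (1 - p) * (1 - (1 - 1 / (ℓ : ℝ)) ^ (2 * k)) / (2 * (ℓ : ℝ) - 1)) ∧
    Tendsto (fun k : ℕ => variance (a k) ℙ) atTop
      (nhds (p * (1 - p) / (2 * (ℓ : ℝ) - 1))) ∧
    p * (1 - p) / (2 * (ℓ : ℝ) - 1)
      = ((ℓ : ℝ) / (2 * (ℓ : ℝ) - 1)) * (p * (1 - p)) / (ℓ : ℝ) := by
  have hℓR : (1 : ℝ) ≤ ℓ := by exact_mod_cast hℓ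
  set r : ℝ := 1 - 1 / ℓ
  have hvar_ζ : ∀ k, 1 ≤ k → Var[ζ k; ℙ] = p * (1 - p) := fun k hk ↦ by
    rw [variance_of_forall_eq_zero_or_one (hmeas k) (h01 k), measureReal_def, hprob k hk,
      ENNReal.toReal_ofReal hp0]
  have hrec' : ∀ k, a (k + 1) = r • a k + (1 / (ℓ : ℝ)) • ζ (k + 1) := fun k ↦ by
    funext ω
    simp only [hrec, Pi.add_apply, Pi.smul_apply, smul_eq_mul, r]
    ring
  have hmemLp : ∀ k, MemLp ((1 / (ℓ : ℝ)) • ζ k) 2 ℙ := fun k ↦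
    (memLp_of_forall_eq_zero_or_one (hmeas k).aestronglyMeasurable (h01 k) 2).const_smul _
  have hpairwise : Pairwise fun i j ↦ IndepFun ((1 / (ℓ : ℝ)) • ζ i) ((1 / (ℓ : ℝ)) • ζ j) ℙ :=
    fun i j hij ↦ (hindep.indepFun hij).comp (measurable_const_mul _) (measurable_const_mul _)
  have hvar : ∀ k : ℕ, Var[a k; ℙ] = p * (1 - p) * (1 - r ^ (2 * k)) / (2 * ℓ - 1) := fun k ↦ by
    rw [variance_eq_sum_of_forall_eq_smul_add (funext h0) hrec' hmemLp hpairwise, mul_div_assoc,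
      ← sum_geom_one_sub_inv_sq_mul (by linarith) k, mul_sum]
    refine sum_congr rfl fun j hj ↦ ?_
    rw [variance_smul, hvar_ζ _ (Nat.sub_pos_of_lt (mem_range.1 hj))]
    ring
  refine ⟨fun k _ ↦ hvar k, ?_, by field_simp⟩
  have hr : Tendsto (fun k : ℕ ↦ r ^ (2 * k)) atTop (nhds 0) := by
    have hr0 : 0 ≤ r := sub_nonneg.2 ((div_le_one (by linarith)).2 hℓR)
    have hr1 : r < 1 := sub_lt_self _ (by positivity)
    simpa only [pow_mul] using tendsto_pow_atTop_nhds_zero_of_lt_one (sq_nonneg r) (by nlinarith)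
  simpa [hvar] using
    ((tendsto_const_nhds (x := 1).sub hr).const_mul (p * (1 - p))).div_const (2 * (ℓ : ℝ) - 1)

/-- Variance of the Memoryless Run-time Estimator driven by i.i.d. Bernoulli(p) alarms:
`Var[α̂_k] = p (1 − p) (1 − (1 − 1/ℓ)^{2k}) / (2ℓ − 1)` for all `k ≥ 1`; in particular
`Var[α̂_k] → p(1−p)/(2ℓ−1) = θ p(1−p)/ℓ` with `θ = ℓ/(2ℓ−1)` (the scaling of `τ = 1`). -/
theorem mre_variance {Ω : Type*} [MeasureSpace Ω] [IsProbabilityMeasure (ℙ : Measure Ω)]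
    (ℓ : ℕ) (hℓ : 1 ≤ ℓ) (p : ℝ) (hp0 : 0 ≤ p) (hp1 : p ≤ 1)
    (ζ : ℕ → Ω → ℝ) (hmeas : ∀ k, Measurable (ζ k))
    (hindep : iIndepFun ζ ℙ)
    (h01 : ∀ k ω, ζ k ω = 0 ∨ ζ k ω = 1)
    (hprob : ∀ k, 1 ≤ k → ℙ {ω | ζ k ω = 1} = ENNReal.ofReal p)
    (a : ℕ → Ω → ℝ) (h0 : ∀ ω, a 0 ω = 0)
    (hrec : ∀ (k : ℕ) (ω : Ω),
      a (k + 1) ω = a k ω + (ζ (k + 1) ω - a k ω) / (ℓ : ℝ)) :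
    (∀ k : ℕ, 1 ≤ k → variance (a k) ℙ
        = p * (1 - p) * (1 - (1 - 1 / (ℓ : ℝ)) ^ (2 * k)) / (2 * (ℓ : ℝ) - 1)) ∧
    Tendsto (fun k : ℕ => variance (a k) ℙ) atTop
      (nhds (p * (1 - p) / (2 * (ℓ : ℝ) - 1))) ∧
    p * (1 - p) / (2 * (ℓ : ℝ) - 1)
      = ((ℓ : ℝ) / (2 * (ℓ : ℝ) - 1)) * (p * (1 - p)) / (ℓ : ℝ) :=
  mre_variance_general ℓ hℓ p hp0 ζ hmeas hindep h01 hprob a h0 hrec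
end
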